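/- Uniqueness of inversion for a two-layer generative model: let x = φ(W₂ x₁) where x₁ = ReLU(W₁ z*), φ is injective, s₁ = ‖x₁‖₀ < spark(W₂)/2, and subrank(W₁, s₁) = n₀. Then for any z with φ(W₂ ReLU(W₁ z)) = x and ‖ReLU(W₁ z)‖₀ ≤ s₁, we have z = z*. -/

import Mathlib

open Matrix MeasureTheory ProbabilityTheory

noncomputable def supp {m : ℕ} (x : Fin m → ℝ) : Finset (Fin m) :=
  (Set.toFinite {j | x j ≠ 0}).toFinset

noncomputable def norm0 {m : ℕ} (x : Fin m → ℝ) : ℕ := (supp x).card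

def rowSub {n m : ℕ} (W : Matrix (Fin n) (Fin m) ℝ) (S : Finset (Fin n)) :
    Matrix {i // i ∈ S} (Fin m) ℝ := fun i j => W i.1 j

noncomputable def spark {ι : Type*} [Fintype ι] {m : ℕ} (W : Matrix ι (Fin m) ℝ) : ℕ :=
  sInf ({m + 1} ∪ {k | ∃ x : Fin m → ℝ, x ≠ 0 ∧ W.mulVec x = 0 ∧ norm0 x = k})

noncomputable def subspark {n m : ℕ} (W : Matrix (Fin n) (Fin m) ℝ) (s : ℕ) : ℕ :=
  sInf {k | ∃ S : Finset (Fin n), S.card = s ∧ spark (rowSub W S) = k}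

noncomputable def subrank {n m : ℕ} (W : Matrix (Fin n) (Fin m) ℝ) (s : ℕ) : ℕ :=
  sInf {k | ∃ S : Finset (Fin n), S.card = s ∧ (rowSub W S).rank = k}

def vrelu {k : ℕ} (v : Fin k → ℝ) : Fin k → ℝ := fun i => max (v i) 0

noncomputable def lambdaMin {s : ℕ} (M : Matrix (Fin s) (Fin s) ℝ) : ℝ :=
  sInf {r : ℝ | ∃ v : Fin s → ℝ, v ≠ 0 ∧ M.mulVec v = r • v}

noncomputable def lambdaMax {s : ℕ} (M : Matrix (Fin s) (Fin s) ℝ) : ℝ :=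
  sSup {r : ℝ | ∃ v : Fin s → ℝ, v ≠ 0 ∧ M.mulVec v = r • v}

/-!
Since `φ` is injective, the two first-layer outputs `x₁ = ReLU(W₁ z*)` and `y₁ = ReLU(W₁ z)` have
the same image under `W₂`, so `W₂ (y₁ - x₁) = 0` with `‖y₁ - x₁‖₀ ≤ 2 s₁ < spark W₂`, forcing
`y₁ = x₁`. On the support `S` of `x₁` the ReLU is the identity, so the rows of `W₁` indexed by `S`
agree on `z` and `z*`; these rows have rank at least `subrank(W₁, s₁) = n₀`, hence full column rank,
and `z = z*`.
-/

theorem Matrix.mulVec_injective_of_rank_eq_card_width {m n K : Type*} [Fintype n] [Field K]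
    {A : Matrix m n K} (h : A.rank = Fintype.card n) : Function.Injective A.mulVec :=
  mulVec_injective_iff.2 <| linearIndependent_iff_card_eq_finrank_span.2 <| by
    rw [← h, rank_eq_finrank_span_cols]
    rfl

section

variable {m : ℕ}

theorem mem_supp {x : Fin m → ℝ} {j : Fin m} : j ∈ supp x ↔ x j ≠ 0 := by
  simp [supp]

theorem norm0_sub_le (x y : Fin m → ℝ) : norm0 (x - y) ≤ norm0 x + norm0 y := by
  have hsupp : supp (x - y) ⊆ supp x ∪ supp y := by
    intro j hj
    simp only [Finset.mem_union, mem_supp] at hj ⊢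
    by_contra! h
    simp [h.1, h.2] at hj
  exact (Finset.card_le_card hsupp).trans (Finset.card_union_le _ _)

theorem spark_le_norm0 {ι : Type*} [Fintype ι] {W : Matrix ι (Fin m) ℝ} {x : Fin m → ℝ}
    (hx : x ≠ 0) (hWx : W *ᵥ x = 0) : spark W ≤ norm0 x :=
  Nat.sInf_le (Or.inr ⟨x, hx, hWx, rfl⟩)

theorem eq_of_mulVec_eq_of_norm0_add_lt_spark {ι : Type*} [Fintype ι] {W : Matrix ι (Fin m) ℝ}
    {x y : Fin m → ℝ} (hsp : norm0 x + norm0 y < spark W) (hW : W *ᵥ x = W *ᵥ y) : x = y := by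
  by_contra hne
  have hspark := spark_le_norm0 (sub_ne_zero.2 hne) (by rw [mulVec_sub, hW, sub_self])
  have hsub := norm0_sub_le x y
  omega

theorem vrelu_apply_of_ne_zero {v : Fin m → ℝ} {i : Fin m} (h : vrelu v i ≠ 0) :
    vrelu v i = v i := by
  unfold vrelu at *
  rcases le_total (v i) 0 with hi | hi
  · simp [max_eq_right hi] at h
  · exact max_eq_left hi

theorem subrank_le_rank_rowSub {n : ℕ} (W : Matrix (Fin n) (Fin m) ℝ) (S : Finset (Fin n)) :
    subrank W S.card ≤ (rowSub W S).rank :=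
  Nat.sInf_le ⟨S, rfl, rfl⟩

theorem rowSub_supp_vrelu_mulVec_eq {n : ℕ} {W : Matrix (Fin n) (Fin m) ℝ} {z z' : Fin m → ℝ}
    (h : vrelu (W *ᵥ z) = vrelu (W *ᵥ z')) :
    rowSub W (supp (vrelu (W *ᵥ z'))) *ᵥ z = rowSub W (supp (vrelu (W *ᵥ z'))) *ᵥ z' := by
  funext i
  have hi' : vrelu (W *ᵥ z') i.1 ≠ 0 := mem_supp.1 i.2
  have hi : vrelu (W *ᵥ z) i.1 ≠ 0 := by rwa [h]
  change (W *ᵥ z) i.1 = (W *ᵥ z') i.1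
  rw [← vrelu_apply_of_ne_zero hi, ← vrelu_apply_of_ne_zero hi', h]

end

theorem two_layer_uniqueness {n n0 n1 : ℕ}
    (W1 : Matrix (Fin n1) (Fin n0) ℝ) (W2 : Matrix (Fin n) (Fin n1) ℝ)
    (φ : (Fin n → ℝ) → Fin n → ℝ) (hφ : Function.Injective φ) (zs : Fin n0 → ℝ)
    (hsp : 2 * norm0 (vrelu (W1.mulVec zs)) < spark W2)
    (hrk : subrank W1 (norm0 (vrelu (W1.mulVec zs))) = n0) :
    ∀ z : Fin n0 → ℝ,
      φ (W2.mulVec (vrelu (W1.mulVec z))) = φ (W2.mulVec (vrelu (W1.mulVec zs))) →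
      norm0 (vrelu (W1.mulVec z)) ≤ norm0 (vrelu (W1.mulVec zs)) → z = zs := by
  intro z hx hle
  have hrelu : vrelu (W1 *ᵥ z) = vrelu (W1 *ᵥ zs) :=
    eq_of_mulVec_eq_of_norm0_add_lt_spark (by omega) (hφ hx)
  have hrank : (rowSub W1 (supp (vrelu (W1 *ᵥ zs)))).rank = Fintype.card (Fin n0) := by
    refine le_antisymm (rank_le_card_width _) ?_
    have hsub := subrank_le_rank_rowSub W1 (supp (vrelu (W1 *ᵥ zs)))
    rw [← norm0, hrk] at hsub
    rwa [Fintype.card_fin]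
  exact mulVec_injective_of_rank_eq_card_width hrank (rowSub_supp_vrelu_mulVec_eq hrelu)
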